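/- For every nonnegative integer n, the evaluation of the Motzkin polynomial at t = 2 equals the shifted Catalan number: M_n(2) = C_{n+1}, where C_j = \binom{2j}{j}/(j+1). -/

import Mathlib

open Polynomial

/-- The weight polynomials `M_{n,k}(t)` of Motzkin paths from `(0,0)` to `(n,k)`. -/
noncomputable def motzkinPoly : ℕ → ℤ → Polynomial ℤ
  | 0, k => if k = 0 then 1 else 0
  | n + 1, k =>
      if k < 0 then 0 else
        motzkinPoly n (k - 1) + X * motzkinPoly n k + motzkinPoly n (k + 1)
  termination_by n _ => n

/-! At `t = 2` the step weights `1, 2, 1` are the coefficients of `(1 + x)²`, so one Motzkin step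
is two steps of Pascal's rule, and `M_{n,k}(2)` is the ballot number
`C(2n+1, n+k+1) - C(2n+1, n+k+2)`: both satisfy the same recurrence, the boundary condition at
`k = 0` holding by the symmetry `C(2n+1, n) = C(2n+1, n+1)`. For `k = 0` this ballot number is the
classical `C_{n+1} = C(2n+2, n+1) - C(2n+2, n+2)`. -/

def ballot (m j : ℕ) : ℤ := m.choose j - m.choose (j + 1)

theorem ballot_succ_succ (m j : ℕ) : ballot (m + 1) (j + 1) = ballot m j + ballot m (j + 1) := by
  simp only [ballot, Nat.choose_succ_succ', Nat.cast_add]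
  ring

theorem ballot_add_two (m j : ℕ) :
    ballot (m + 2) (j + 2) = ballot m j + 2 * ballot m (j + 1) + ballot m (j + 2) := by
  rw [ballot_succ_succ, ballot_succ_succ, ballot_succ_succ]
  ring

theorem ballot_two_mul_add_one_self (n : ℕ) : ballot (2 * n + 1) n = 0 := by
  rw [ballot, Nat.choose_symm_half, sub_self]

theorem catalan_eq_ballot (n : ℕ) : (catalan n : ℤ) = ballot (2 * n) n := by
  have hcat : ((n + 1 : ℕ) : ℤ) * catalan n = (2 * n).choose n := by
    exact_mod_cast succ_mul_catalan_eq_centralBinom n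
  have hnext : ((2 * n).choose (n + 1) : ℤ) * (n + 1) = (2 * n).choose n * n := by
    have := Nat.choose_succ_right_eq (2 * n) n
    rw [show 2 * n - n = n by omega] at this
    exact_mod_cast this
  refine mul_left_cancel₀ (show ((n + 1 : ℕ) : ℤ) ≠ 0 by positivity) ?_
  rw [hcat, ballot]
  push_cast
  linear_combination hnext

theorem motzkinPoly_of_neg (n : ℕ) {k : ℤ} (hk : k < 0) : motzkinPoly n k = 0 := by
  cases n <;> rw [motzkinPoly] <;> simp [hk, hk.ne]

theorem motzkinPoly_succ_of_nonneg (n : ℕ) {k : ℤ} (hk : 0 ≤ k) :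
    motzkinPoly (n + 1) k = motzkinPoly n (k - 1) + X * motzkinPoly n k + motzkinPoly n (k + 1) := by
  rw [motzkinPoly, if_neg hk.not_gt]

theorem motzkinPoly_eval_two_eq_ballot (n k : ℕ) :
    (motzkinPoly n k).eval 2 = ballot (2 * n + 1) (n + k + 1) := by
  induction n generalizing k with
  | zero =>
    rcases k with _ | k
    · simp [motzkinPoly, ballot]
    · simp [motzkinPoly, ballot, Nat.choose_eq_zero_of_lt, show (k : ℤ) + 1 ≠ 0 by omega]
  | succ n ih =>
    have hstep (k : ℕ) : (motzkinPoly (n + 1) k).eval 2 =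
        (motzkinPoly n (k - 1 : ℤ)).eval 2 + 2 * ballot (2 * n + 1) (n + k + 1)
          + ballot (2 * n + 1) (n + k + 2) := by
      rw [motzkinPoly_succ_of_nonneg n (Int.natCast_nonneg k), eval_add, eval_add, eval_mul,
        eval_X, ih, ← Nat.cast_succ, ih]
      rfl
    rw [show 2 * (n + 1) + 1 = 2 * n + 1 + 2 by ring, show n + 1 + k + 1 = n + k + 2 by ring,
      ballot_add_two, hstep]
    rcases k with _ | k
    · rw [motzkinPoly_of_neg n (by norm_num), eval_zero]
      simp only [add_zero]
      rw [ballot_two_mul_add_one_self]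
    · rw [Nat.cast_succ, add_sub_cancel_right, ih]
      rfl

/-- `M_n(2) = C_{n+1}`, the shifted Catalan numbers. -/
theorem motzkinPoly_eval_two (n : ℕ) :
    (motzkinPoly n 0).eval 2 = (catalan (n + 1) : ℤ) := by
  rw [catalan_eq_ballot, show 2 * (n + 1) = 2 * n + 1 + 1 by ring, ballot_succ_succ,
    ballot_two_mul_add_one_self, zero_add]
  exact_mod_cast motzkinPoly_eval_two_eq_ballot n 0
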